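/- arXiv:1907.05082 — 9 statements merged into one kernel-verified Lean document; each statement's English description precedes it below -/
import Mathlib

section
/- If a positional scoring rule with strictly decreasing scores satisfies independence of unanimous losers, then for every k ≤ m the score vector used for k candidates is linearly equivalent to the first k entries of the score vector used for m candidates. Conversely, if the scores are strictly decreasing and each k-candidate vector is linearly equivalent to the first k entries of the m-candidate vector, the rule satisfies independence of unanimous losers. -/
/-- Total score of candidate `a`: in race `i`, `P i` sends each candidate to their
(0-indexed) finishing position, which is worth `s` points. -/
def TotalScore {n k : ℕ} (s : Fin k → ℝ) (P : Fin n → Equiv.Perm (Fin k)) (a : Fin k) : ℝ :=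
  ∑ i, s (P i a)

/-- Total score of candidate `a` after removal of a unanimous loser (who occupies the last
position, `k`, of `Fin (k+1)` in every race): the remaining candidates keep their positions,
now scored by the `k`-candidate score vector `s`. -/
def RTotalL {n k : ℕ} (s : Fin k → ℝ) (P : Fin n → Equiv.Perm (Fin (k+1))) (a : Fin (k+1)) : ℝ :=
  ∑ i, if h : (P i a : ℕ) < k then s ⟨(P i a : ℕ), h⟩ else 0

/-- Independence of unanimous losers for a scoring rule `s` (a score vector for each number
of candidates), over at most `m` candidates: in any nonempty profile with a unanimous loser,
the loser is ranked strictly last, and the ranking of the other candidates is the same before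
and after the loser's removal. -/
def IndepUnanimousLosers (m : ℕ) (s : ∀ k, Fin k → ℝ) : Prop :=
  ∀ k, k + 1 ≤ m → ∀ n, 0 < n → ∀ P : Fin n → Equiv.Perm (Fin (k+1)), ∀ c : Fin (k+1),
    (∀ i, (P i c : ℕ) = k) →
    (∀ a, a ≠ c → TotalScore (s (k+1)) P c < TotalScore (s (k+1)) P a) ∧
    (∀ a b, a ≠ c → b ≠ c →
      (TotalScore (s (k+1)) P a ≤ TotalScore (s (k+1)) P b ↔
        RTotalL (s k) P a ≤ RTotalL (s k) P b))

/-!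
Affine rescalings with positive slope preserve every comparison of total scores, which gives
the converse. For the forward direction it suffices to compare the `k`- and `(k+1)`-candidate
vectors `u` and `t`. Take `q` races in which candidates `0` and `j` swap places, `p` races in
natural order, and candidate `k` last throughout: candidate `0` is ranked at least as high as
candidate `1` iff `p / q ≤ (t 1 - t j) / (t 0 - t 1)`. Independence of unanimous losers makes
this equivalent to the same inequality for `u`, for every `p / q`, so the normalized scores
`(t 1 - t j) / (t 0 - t 1)` and `(u 1 - u j) / (u 0 - u 1)` coincide.
-/

def LinearlyEquivalent {ι : Type*} (u t : ι → ℝ) : Prop :=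
  ∃ α : ℝ, 0 < α ∧ ∃ β : ℝ, ∀ j, u j = α * t j + β

namespace LinearlyEquivalent

variable {ι κ : Type*} {u t w : ι → ℝ}

theorem refl (t : ι → ℝ) : LinearlyEquivalent t t :=
  ⟨1, one_pos, 0, fun _ => by ring⟩

theorem trans (h₁ : LinearlyEquivalent u t) (h₂ : LinearlyEquivalent t w) :
    LinearlyEquivalent u w := by
  obtain ⟨α, hα, β, h₁⟩ := h₁
  obtain ⟨α', hα', β', h₂⟩ := h₂
  exact ⟨α * α', mul_pos hα hα', α * β' + β, fun j => by rw [h₁, h₂]; ring⟩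

theorem comp (h : LinearlyEquivalent u t) (f : κ → ι) : LinearlyEquivalent (u ∘ f) (t ∘ f) := by
  obtain ⟨α, hα, β, h⟩ := h
  exact ⟨α, hα, β, fun j => h (f j)⟩

theorem of_subsingleton [Subsingleton ι] (u t : ι → ℝ) : LinearlyEquivalent u t := by
  rcases isEmpty_or_nonempty ι with hι | ⟨⟨j₀⟩⟩
  · exact ⟨1, one_pos, 0, fun j => isEmptyElim j⟩
  · exact ⟨1, one_pos, u j₀ - t j₀, fun j => by rw [Subsingleton.elim j j₀]; ring⟩

end LinearlyEquivalent

theorem exists_nat_btwn_mul {x y : ℝ} (hx : 0 ≤ x) (hxy : x < y) :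
    ∃ p q : ℕ, 0 < q ∧ q * x < p ∧ p < q * y := by
  obtain ⟨q, hq⟩ := exists_nat_gt (y - x)⁻¹
  have hq₀ : (0 : ℝ) < q := (inv_pos.2 (sub_pos.2 hxy)).trans hq
  have hgap : 1 < q * (y - x) := (inv_lt_iff_one_lt_mul₀ (sub_pos.2 hxy)).1 hq
  have hfloor : (⌊q * x⌋₊ : ℝ) ≤ q * x := Nat.floor_le (by positivity)
  refine ⟨⌊q * x⌋₊ + 1, q, by exact_mod_cast hq₀, by exact_mod_cast Nat.lt_floor_add_one _, ?_⟩
  push_cast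
  linarith

theorem eq_of_forall_nat_le_mul_iff {x y : ℝ} (hx : 0 ≤ x) (hy : 0 ≤ y)
    (h : ∀ p q : ℕ, 0 < q → ((p : ℝ) ≤ q * x ↔ (p : ℝ) ≤ q * y)) : x = y := by
  rcases lt_trichotomy x y with hxy | hxy | hyx
  · obtain ⟨p, q, hq, h₁, h₂⟩ := exists_nat_btwn_mul hx hxy
    exact absurd ((h p q hq).2 h₂.le) (not_le.2 h₁)
  · exact hxy
  · obtain ⟨p, q, hq, h₁, h₂⟩ := exists_nat_btwn_mul hy hyx
    exact absurd ((h p q hq).1 h₂.le) (not_le.2 h₁)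

theorem linearlyEquivalent_of_mixture_le_iff {n : ℕ} {t u : Fin (n + 2) → ℝ}
    (ht : StrictAnti t) (hu : StrictAnti u)
    (h : ∀ j, 1 < j → ∀ p q : ℕ, 0 < q →
      ((q * t j + p * t 0 ≤ (q + p) * t 1) ↔ (q * u j + p * u 0 ≤ (q + p) * u 1))) :
    LinearlyEquivalent u t := by
  have hdt : 0 < t 0 - t 1 := sub_pos.2 (ht Fin.zero_lt_one)
  have hdu : 0 < u 0 - u 1 := sub_pos.2 (hu Fin.zero_lt_one)
  refine ⟨(u 0 - u 1) / (t 0 - t 1), div_pos hdu hdt,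
    u 1 - (u 0 - u 1) / (t 0 - t 1) * t 1, fun j => ?_⟩
  rcases le_or_gt j 1 with hj | hj
  · obtain rfl | rfl : j = 0 ∨ j = 1 := by
      simp only [Fin.le_def, Fin.ext_iff, Fin.val_zero, Fin.val_one] at hj ⊢; omega
    · field_simp; ring
    · ring
  have hnormal : ∀ v : Fin (n + 2) → ℝ, 0 < v 0 - v 1 → ∀ p q : ℕ,
      (q * v j + p * v 0 ≤ (q + p) * v 1 ↔ (p : ℝ) ≤ q * ((v 1 - v j) / (v 0 - v 1))) := by
    intro v hv p q
    rw [← mul_div_assoc, le_div_iff₀ hv]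
    constructor <;> intro <;> linarith
  have hratio : (u 1 - u j) / (u 0 - u 1) = (t 1 - t j) / (t 0 - t 1) :=
    eq_of_forall_nat_le_mul_iff (div_nonneg (sub_nonneg.2 (hu.antitone hj.le)) hdu.le)
      (div_nonneg (sub_nonneg.2 (ht.antitone hj.le)) hdt.le)
      fun p q hq => by rw [← hnormal u hdu, ← hnormal t hdt]; exact (h j hj p q hq).symm
  field_simp at hratio ⊢
  linarith

section Scores

variable {n k : ℕ}

theorem rTotalL_eq_totalScore_snoc (s : Fin k → ℝ) (P : Fin n → Equiv.Perm (Fin (k + 1)))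
    (a : Fin (k + 1)) : RTotalL s P a = TotalScore (Fin.snoc s 0) P a :=
  rfl

theorem totalScore_eq_of_affine {t w : Fin k → ℝ} {P : Fin n → Equiv.Perm (Fin k)} {a : Fin k}
    {α β : ℝ} (h : ∀ i, t (P i a) = α * w (P i a) + β) :
    TotalScore t P a = α * TotalScore w P a + n * β := by
  simp only [TotalScore, h, Finset.sum_add_distrib, Finset.mul_sum, Finset.sum_const,
    Finset.card_univ, Fintype.card_fin, nsmul_eq_mul]

theorem totalScore_append {p q : ℕ} (t : Fin k → ℝ) (σ τ : Equiv.Perm (Fin k)) (a : Fin k) :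
    TotalScore t (Fin.append (fun _ : Fin q => σ) (fun _ : Fin p => τ)) a =
      q * t (σ a) + p * t (τ a) := by
  simp [TotalScore, Fin.sum_univ_add]

end Scores

namespace IndepUnanimousLosers

variable {m : ℕ} {s : ∀ k, Fin k → ℝ}

/-- The profile: in `q` races candidates `a` and `j` swap places, in `p` races every candidate
`x` finishes at position `x`; candidate `k` is always last. -/
theorem mixture_le_iff (hI : IndepUnanimousLosers m s) {k : ℕ} (hk : k + 1 ≤ m)
    {a b j : Fin k} (hba : b ≠ a) (hbj : b ≠ j) {p q : ℕ} (hn : 0 < q + p) :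
    q * s (k + 1) j.castSucc + p * s (k + 1) a.castSucc ≤ (q + p) * s (k + 1) b.castSucc ↔
      q * s k j + p * s k a ≤ (q + p) * s k b := by
  set σ := Equiv.swap a.castSucc j.castSucc
  set P := Fin.append (fun _ : Fin q => σ) (fun _ : Fin p => (1 : Equiv.Perm (Fin (k + 1))))
  have hσb : σ b.castSucc = b.castSucc :=
    Equiv.swap_apply_of_ne_of_ne (by simpa using hba) (by simpa using hbj)
  have hσlast : σ (Fin.last k) = Fin.last k :=
    Equiv.swap_apply_of_ne_of_ne (Fin.castSucc_ne_last a).symm (Fin.castSucc_ne_last j).symm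
  have hloser : ∀ i, (P i (Fin.last k) : ℕ) = k := by
    intro i
    refine Fin.addCases (fun i => ?_) (fun i => ?_) i <;> simp [P, hσlast]
  have key := (hI k hk (q + p) hn P (Fin.last k) hloser).2 a.castSucc b.castSucc
    (Fin.castSucc_ne_last a) (Fin.castSucc_ne_last b)
  simpa [P, rTotalL_eq_totalScore_snoc, totalScore_append, hσb, σ, add_mul] using key

theorem linearlyEquivalent_succ (hI : IndepUnanimousLosers m s) {k : ℕ} (hk : k + 1 ≤ m)
    (ht : StrictAnti (s (k + 1))) (hu : StrictAnti (s k)) :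
    LinearlyEquivalent (s k) (s (k + 1) ∘ Fin.castSucc) := by
  match k, hk, ht, hu with
  | 0, _, _, _ | 1, _, _, _ => exact .of_subsingleton _ _
  | k + 2, hk, ht, hu =>
    exact linearlyEquivalent_of_mixture_le_iff (ht.comp_strictMono Fin.strictMono_castSucc) hu
      fun j hj p q hq => hI.mixture_le_iff hk Fin.zero_lt_one.ne' hj.ne (by omega)

theorem linearlyEquivalent (hI : IndepUnanimousLosers m s) (hdec : ∀ k ≤ m, StrictAnti (s k))
    {k : ℕ} (hk : k ≤ m) : LinearlyEquivalent (s k) (s m ∘ Fin.castLE hk) := by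
  induction hk using Nat.decreasingInduction with
  | self => exact .refl _
  | of_succ k hk ih =>
    exact (hI.linearlyEquivalent_succ hk (hdec _ hk) (hdec k hk.le)).trans (ih.comp Fin.castSucc)

end IndepUnanimousLosers

theorem indepUnanimousLosers_of_linearlyEquivalent {m : ℕ} {s : ∀ k, Fin k → ℝ}
    (hdec : ∀ k ≤ m, StrictAnti (s k))
    (h : ∀ k (hk : k ≤ m), LinearlyEquivalent (s k) (s m ∘ Fin.castLE hk)) :
    IndepUnanimousLosers m s := by
  intro k hk n hn P c hc
  obtain ⟨α₁, hα₁, β₁, h₁⟩ := h (k + 1) hk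
  obtain ⟨α₂, hα₂, β₂, h₂⟩ := h k (by omega)
  have hc' : ∀ i, P i c = Fin.last k := fun i => Fin.ext (hc i)
  have hlast : ∀ a ≠ c, ∀ i, P i a ≠ Fin.last k := fun a ha i e =>
    ha ((P i).injective (e.trans (hc' i).symm))
  refine ⟨fun a ha => ?_, fun a b ha hb => ?_⟩
  · refine Finset.sum_lt_sum_of_nonempty ⟨⟨0, hn⟩, Finset.mem_univ _⟩ fun i _ => ?_
    rw [hc' i]
    exact hdec _ hk (Fin.lt_last_iff_ne_last.2 (hlast a ha i))
  set w := s m ∘ Fin.castLE hk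
  have hT : ∀ x, TotalScore (s (k + 1)) P x = α₁ * TotalScore w P x + n * β₁ :=
    fun x => totalScore_eq_of_affine fun i => h₁ _
  have hR : ∀ x ≠ c, RTotalL (s k) P x = α₂ * TotalScore w P x + n * β₂ := fun x hx => by
    rw [rTotalL_eq_totalScore_snoc]
    refine totalScore_eq_of_affine fun i => ?_
    obtain ⟨y, hy⟩ := Fin.exists_castSucc_eq.2 (hlast x hx i)
    rw [← hy, Fin.snoc_castSucc, h₂]
    rfl
  rw [hT, hT, hR a ha, hR b hb, add_le_add_iff_right, add_le_add_iff_right,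
    mul_le_mul_iff_right₀ hα₁, mul_le_mul_iff_right₀ hα₂]

/-- A scoring rule with strictly decreasing scores satisfies independence of unanimous losers
iff, for every `k ≤ m`, the `k`-candidate scores are linearly equivalent to the first `k`
entries of the `m`-candidate scores. -/
theorem stmt1 (m : ℕ) (s : ∀ k, Fin k → ℝ)
    (hdec : ∀ k, k ≤ m → ∀ i j : Fin k, i < j → s k j < s k i) :
    IndepUnanimousLosers m s ↔
      ∀ k, ∀ hk : k ≤ m, ∃ α : ℝ, 0 < α ∧ ∃ β : ℝ,
        ∀ j : Fin k, s k j = α * s m (Fin.castLE hk j) + β :=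
  ⟨fun hI _ hk => hI.linearlyEquivalent hdec hk, indepUnanimousLosers_of_linearlyEquivalent hdec⟩
end

section
/- For the geometric scoring rule with parameter p, 0<p<1, and m ≥ 3 candidates, there is a profile of m−1 races in which a candidate who finishes second in every race has strictly greater total score than every other candidate, hence the overall winner never comes first in any race. -/
lemma geom_key (n : ℕ) (p : ℝ) (hp0 : 0 < p) (hp1 : p < 1) :
    ((n : ℝ) + 3) * p ^ (n+1) < ∑ t ∈ Finset.range (n+3), p ^ t := by
  have h1 : ((n : ℝ) + 1) * p ^ n ≤ ∑ t ∈ Finset.range (n+1), p ^ t := by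
    have := Finset.card_nsmul_le_sum (Finset.range (n+1)) (fun t => p ^ t) (p ^ n)
      (fun t ht => pow_le_pow_of_le_one hp0.le hp1.le (by
        simpa using Nat.lt_succ_iff.mp (Finset.mem_range.mp ht)))
    simpa [nsmul_eq_mul, add_comm] using this
  rw [show n + 3 = (n+1) + 1 + 1 by ring, Finset.sum_range_succ, Finset.sum_range_succ]
  have hq : 0 < p ^ n := pow_pos hp0 n
  have e1 : p ^ (n+1) = p ^ n * p := pow_succ p n
  have e2 : p ^ (n+1+1) = p ^ n * p * p := by rw [pow_succ, e1]
  nlinarith [mul_pos (mul_pos hq (sub_pos.2 hp1)) (show (0:ℝ) < (n:ℝ) + 1 - p by nlinarith)]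

/-- For the geometric rule with `0 < p < 1` (position `j`, 0-indexed, worth `1 - p^(m-1-j)`)
and `m ≥ 3` candidates, there is a profile of `m-1` races in which a candidate finishing
second (position 1) in every race strictly beats every other candidate; hence the overall
winner never comes first in any race. -/
theorem stmt3 (m : ℕ) (hm : 3 ≤ m) (p : ℝ) (hp0 : 0 < p) (hp1 : p < 1) :
    ∃ P : Fin (m-1) → Equiv.Perm (Fin m), ∃ a : Fin m,
      (∀ i, (P i a : ℕ) = 1) ∧
      (∀ b, b ≠ a →
        TotalScore (fun j : Fin m => 1 - p ^ (m - 1 - (j : ℕ))) P b <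
          TotalScore (fun j : Fin m => 1 - p ^ (m - 1 - (j : ℕ))) P a) := by
  obtain ⟨n, rfl⟩ := Nat.exists_eq_add_of_le' hm
  set s : Fin (n+3) → ℝ := fun j : Fin (n+3) => 1 - p ^ (n + 3 - 1 - (j : ℕ)) with hs
  refine ⟨fun i : Fin (n+2) =>
    (finSuccEquiv' (0 : Fin (n+3))).trans
      ((Equiv.optionCongr (Equiv.addRight i)).trans (finSuccEquiv' (1 : Fin (n+3))).symm),
    0, ?_, ?_⟩
  · intro i
    simp [Equiv.trans_apply]
  · intro b hb
    -- evaluate the permutation on b = k.succ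
    have hPa : ∀ i : Fin (n+2),
        ((finSuccEquiv' (0 : Fin (n+3))).trans
          ((Equiv.optionCongr (Equiv.addRight i)).trans (finSuccEquiv' (1 : Fin (n+3))).symm)) 0
        = 1 := by
      intro i; simp [Equiv.trans_apply]
    obtain ⟨k, rfl⟩ : ∃ k : Fin (n+2), b = Fin.succ k := by
      refine ⟨b.pred hb, ?_⟩; simp
    have hPb : ∀ i : Fin (n+2),
        ((finSuccEquiv' (0 : Fin (n+3))).trans
          ((Equiv.optionCongr (Equiv.addRight i)).trans (finSuccEquiv' (1 : Fin (n+3))).symm))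
          (Fin.succ k)
        = (1 : Fin (n+3)).succAbove (k + i) := by
      intro i
      rw [Equiv.trans_apply, Equiv.trans_apply, ← Fin.zero_succAbove k,
        finSuccEquiv'_succAbove]
      simp [finSuccEquiv'_symm_some]
    have hta : TotalScore s (fun i : Fin (n+2) =>
        (finSuccEquiv' (0 : Fin (n+3))).trans
          ((Equiv.optionCongr (Equiv.addRight i)).trans (finSuccEquiv' (1 : Fin (n+3))).symm)) 0
        = ((n : ℝ) + 2) * s 1 := by
      unfold TotalScore
      rw [Finset.sum_congr rfl (fun i _ => by rw [hPa i])]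
      simp [mul_comm]
    have htb : TotalScore s (fun i : Fin (n+2) =>
        (finSuccEquiv' (0 : Fin (n+3))).trans
          ((Equiv.optionCongr (Equiv.addRight i)).trans (finSuccEquiv' (1 : Fin (n+3))).symm))
        (Fin.succ k)
        = (∑ j : Fin (n+3), s j) - s 1 := by
      unfold TotalScore
      rw [Finset.sum_congr rfl (fun i _ => by rw [hPb i])]
      have := Equiv.sum_comp (Equiv.addLeft k)
        (fun j : Fin (n+2) => s ((1 : Fin (n+3)).succAbove j))
      simp only [Equiv.coe_addLeft] at this
      rw [this, Fin.sum_univ_succAbove s 1]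
      ring
    rw [hta, htb]
    -- now pure arithmetic
    have hs1 : s 1 = 1 - p ^ (n+1) := by
      simp [hs]
    have hsum : (∑ j : Fin (n+3), s j)
        = ((n : ℝ) + 3) - ∑ t ∈ Finset.range (n+3), p ^ t := by
      rw [hs]
      rw [Finset.sum_sub_distrib]
      rw [Fin.sum_univ_eq_sum_range (fun j => p ^ (n + 3 - 1 - j)) (n+3)]
      rw [Finset.sum_range_reflect (fun t => p ^ t) (n+3)]
      simp
    rw [hs1, hsum]
    have := geom_key n p hp0 hp1
    nlinarith [this]
end

section
/- For any real p>1 and any integer m with m > p²/(p−1), the inequality m·p^{m−1} − m·p^{m−2} − p^m + 1 > 0 holds; consequently, under the geometric scoring rule with parameter p and m candidates, in the profile of m−1 races where candidate a finishes second in every race and each other candidate finishes first exactly once, a strictly beats every other candidate. -/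
open Finset Equiv

lemma four_le_sq_div_sub_one {p : ℝ} (hp : 1 < p) : 4 ≤ p ^ 2 / (p - 1) := by
  rw [le_div_iff₀ (sub_pos.mpr hp)]
  nlinarith [sq_nonneg (p - 2)]

lemma geometric_margin_pos {p : ℝ} (hp : 0 ≤ p) {m : ℕ} (hm : 2 ≤ m)
    (h : p ^ 2 < m * (p - 1)) : 0 < m * p ^ (m - 1) - m * p ^ (m - 2) - p ^ m + 1 := by
  obtain ⟨n, rfl⟩ : ∃ n, m = n + 2 := ⟨m - 2, by omega⟩
  calc (0 : ℝ) < p ^ n * (((n + 2 : ℕ) : ℝ) * (p - 1) - p ^ 2) + 1 := by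
        nlinarith [mul_nonneg (pow_nonneg hp n) (sub_pos.mpr h).le]
    _ = _ := by simp only [Nat.add_sub_cancel, show n + 2 - 1 = n + 1 from rfl]; ring

/-- Candidate `0` plays `a`; in race `i` candidate `j.succ` is sent to `(j + i).succ`, and then
positions `0` and `1` are swapped, so `a` is second and `j.succ` wins exactly when `j + i = 0`. -/
def secondPlaceProfile (n : ℕ) (i : Fin (n + 1)) : Perm (Fin (n + 2)) :=
  Perm.decomposeFin.symm (1, Equiv.addRight i)

namespace secondPlaceProfile

variable {n : ℕ}

@[simp]
lemma apply_zero (i : Fin (n + 1)) : secondPlaceProfile n i 0 = 1 :=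
  Perm.decomposeFin_symm_apply_zero _ _

lemma apply_succ (i j : Fin (n + 1)) :
    secondPlaceProfile n i j.succ = swap 0 1 (j + i).succ :=
  Perm.decomposeFin_symm_apply_succ _ _ _

lemma apply_succ_eq_zero_iff (i j : Fin (n + 1)) :
    secondPlaceProfile n i j.succ = 0 ↔ i = -j := by
  rw [apply_succ, swap_apply_eq_iff, swap_apply_left, ← Fin.succ_zero_eq_one,
    Fin.succ_inj, eq_neg_iff_add_eq_zero, add_comm j i]

lemma totalScore_zero (s : Fin (n + 2) → ℝ) :
    TotalScore s (secondPlaceProfile n) 0 = (n + 1) * s 1 := by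
  simp [TotalScore]

lemma totalScore_succ (s : Fin (n + 2) → ℝ) (j : Fin (n + 1)) :
    TotalScore s (secondPlaceProfile n) j.succ = s 0 + ∑ t : Fin n, s t.succ.succ := by
  have hfix (t : Fin n) : swap (0 : Fin (n + 2)) 1 t.succ.succ = t.succ.succ :=
    swap_apply_of_ne_of_ne (Fin.succ_ne_zero _)
      (by rw [← Fin.succ_zero_eq_one, Ne, Fin.succ_inj]; exact Fin.succ_ne_zero _)
  calc TotalScore s (secondPlaceProfile n) j.succ = ∑ i : Fin (n + 1), s (swap 0 1 i.succ) := by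
        simp only [TotalScore, apply_succ]
        exact Equiv.sum_comp (Equiv.addLeft j) (fun i => s (swap 0 1 i.succ))
    _ = s 0 + ∑ t : Fin n, s t.succ.succ := by
        rw [Fin.sum_univ_succ, Fin.succ_zero_eq_one, swap_apply_right]
        simp only [hfix]

end secondPlaceProfile

lemma sum_fin_pow_reflect (p : ℝ) (n : ℕ) :
    ∑ t : Fin n, p ^ (n + 1 - (t + 1 + 1)) = ∑ t ∈ range n, p ^ t := by
  rw [Fin.sum_univ_eq_sum_range (fun t => p ^ (n + 1 - (t + 1 + 1))), ← sum_range_reflect]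
  refine sum_congr rfl fun t ht => ?_
  rw [mem_range] at ht
  congr 1
  omega

lemma geometric_score_lt {p : ℝ} (hp : 1 < p) {n : ℕ}
    (h : 0 < ((n + 2 : ℕ) : ℝ) * p ^ (n + 1) - ((n + 2 : ℕ) : ℝ) * p ^ n - p ^ (n + 2) + 1) :
    p ^ (n + 1) + ∑ t ∈ range n, p ^ t < (n + 1) * p ^ n := by
  rw [← mul_lt_mul_iff_of_pos_right (sub_pos.mpr hp), add_mul, geom_sum_mul]
  push_cast at h
  nlinarith [pow_succ p n, pow_succ p (n + 1)]

/-- For `p > 1` and `m > p²/(p-1)`: the inequality `m·p^(m-1) - m·p^(m-2) - p^m + 1 > 0`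
holds; consequently, under the geometric rule (position `j`, 0-indexed, worth `p^(m-1-j)`),
in the profile of `m-1` races where candidate `a` is second in every race and every other
candidate is first exactly once, `a` strictly beats every other candidate. -/
theorem stmt5 (p : ℝ) (hp : 1 < p) (m : ℕ) (hm : (m : ℝ) > p ^ 2 / (p - 1)) :
    ((m : ℝ) * p ^ (m - 1) - (m : ℝ) * p ^ (m - 2) - p ^ m + 1 > 0) ∧
    ∃ P : Fin (m-1) → Equiv.Perm (Fin m), ∃ a : Fin m,
      (∀ i, (P i a : ℕ) = 1) ∧
      (∀ b, b ≠ a → ∃! i, (P i b : ℕ) = 0) ∧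
      (∀ b, b ≠ a →
        TotalScore (fun j : Fin m => p ^ (m - 1 - (j : ℕ))) P b <
          TotalScore (fun j : Fin m => p ^ (m - 1 - (j : ℕ))) P a) := by
  have h4m : (4 : ℝ) < m := (four_le_sq_div_sub_one hp).trans_lt hm
  have h2m : 2 ≤ m := by exact_mod_cast (show (2 : ℝ) ≤ m by linarith)
  have key := geometric_margin_pos (by linarith) h2m ((div_lt_iff₀ (sub_pos.mpr hp)).mp hm)
  refine ⟨key, ?_⟩
  obtain ⟨n, rfl⟩ : ∃ n, m = n + 2 := ⟨m - 2, by omega⟩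
  refine ⟨secondPlaceProfile n, 0, fun i => by simp, fun b hb => ?_, fun b hb => ?_⟩
  all_goals obtain ⟨j, rfl⟩ := Fin.eq_succ_of_ne_zero hb
  · simpa only [Fin.val_eq_zero_iff, secondPlaceProfile.apply_succ_eq_zero_iff]
      using existsUnique_eq
  · rw [secondPlaceProfile.totalScore_succ, secondPlaceProfile.totalScore_zero]
    simp only [Fin.val_zero, Fin.val_one, Fin.val_succ, Nat.sub_zero]
    change p ^ (n + 1) + ∑ t : Fin n, p ^ (n + 1 - (t + 1 + 1)) < (n + 1) * p ^ n
    rw [sum_fin_pow_reflect]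
    exact geometric_score_lt hp key
end

section
/- For every integer k ≥ 3 and real p with 0 < p ≤ 1, the inequality k(1−p)(1−p^{k−1}) ≤ 2k(1−p) − 2(1−p^k) holds, with equality only at p = 1. Consequently, under the geometric scoring rule with 0<p<1 and scores 1−p^{k−j}, a majority loser's total score is strictly below the average total score, so the majority loser is never ranked first. -/
private lemma geomFac' (p : ℝ) (n : ℕ) : (1 - p) * ∑ i ∈ Finset.range n, p ^ i = 1 - p ^ n := by
  have := geom_sum_mul p n
  nlinarith [this]

private lemma keyIdent' (m : ℕ) (p : ℝ) :
    2 * ((m : ℝ) + 3) * (1 - p) - 2 * (1 - p ^ (m + 3)) - ((m : ℝ) + 3) * (1 - p) * (1 - p ^ (m + 2))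
    = (1 - p) * ∑ j ∈ Finset.range (m + 1), (1 - p ^ (j + 1)) * (1 - p ^ (m + 1 - j)) := by
  have hS : ∑ i ∈ Finset.range (m + 3), p ^ i
      = 1 + (∑ i ∈ Finset.range (m + 1), p ^ (i + 1)) + p ^ (m + 2) := by
    rw [Finset.sum_range_succ, Finset.sum_range_succ']
    ring
  have hrefl : ∑ j ∈ Finset.range (m + 1), p ^ (m + 1 - j)
      = ∑ j ∈ Finset.range (m + 1), p ^ (j + 1) := by
    rw [← Finset.sum_range_reflect (fun j => p ^ (j + 1)) (m + 1)]
    apply Finset.sum_congr rfl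
    intro j hj
    simp only [Finset.mem_range] at hj
    congr 1
    omega
  have hterm : ∀ j ∈ Finset.range (m + 1),
      (1 - p ^ (j + 1)) * (1 - p ^ (m + 1 - j))
      = 1 + p ^ (m + 2) - p ^ (j + 1) - p ^ (m + 1 - j) := by
    intro j hj
    simp only [Finset.mem_range] at hj
    have : p ^ (j + 1) * p ^ (m + 1 - j) = p ^ (m + 2) := by
      rw [← pow_add]; congr 1; omega
    nlinarith [this]
  rw [Finset.sum_congr rfl hterm]
  have hgeom := geomFac' p (m + 3)
  rw [hS] at hgeom
  simp only [Finset.sum_sub_distrib, Finset.sum_add_distrib, Finset.sum_const,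
    Finset.card_range, nsmul_eq_mul, hrefl]
  push_cast
  nlinarith [hgeom]

private lemma part1le' (m : ℕ) (p : ℝ) (hp : 0 < p) (hp1 : p ≤ 1) :
    ((m : ℝ) + 3) * (1 - p) * (1 - p ^ (m + 2)) ≤ 2 * ((m : ℝ) + 3) * (1 - p) - 2 * (1 - p ^ (m + 3)) := by
  have h := keyIdent' m p
  have hsum : 0 ≤ ∑ j ∈ Finset.range (m + 1), (1 - p ^ (j + 1)) * (1 - p ^ (m + 1 - j)) := by
    apply Finset.sum_nonneg
    intro j hj
    have h1 : p ^ (j + 1) ≤ 1 := pow_le_one₀ hp.le hp1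
    have h2 : p ^ (m + 1 - j) ≤ 1 := pow_le_one₀ hp.le hp1
    nlinarith
  nlinarith [mul_nonneg (by linarith : (0:ℝ) ≤ 1 - p) hsum]

private lemma part1lt' (m : ℕ) (p : ℝ) (hp : 0 < p) (hp1 : p < 1) :
    ((m : ℝ) + 3) * (1 - p) * (1 - p ^ (m + 2)) < 2 * ((m : ℝ) + 3) * (1 - p) - 2 * (1 - p ^ (m + 3)) := by
  have h := keyIdent' m p
  have hsum : 0 < ∑ j ∈ Finset.range (m + 1), (1 - p ^ (j + 1)) * (1 - p ^ (m + 1 - j)) := by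
    apply Finset.sum_pos
    · intro j hj
      simp only [Finset.mem_range] at hj
      have h1 : p ^ (j + 1) < 1 := pow_lt_one₀ hp.le hp1 (by omega)
      have h2 : p ^ (m + 1 - j) < 1 := pow_lt_one₀ hp.le hp1 (by omega)
      nlinarith
    · exact ⟨0, Finset.mem_range.mpr (by omega)⟩
  nlinarith [mul_pos (by linarith : (0:ℝ) < 1 - p) hsum]

private lemma part1le'' (k : ℕ) (hk : 3 ≤ k) (p : ℝ) (hp : 0 < p) (hp1 : p ≤ 1) :
    (k : ℝ) * (1 - p) * (1 - p ^ (k - 1)) ≤ 2 * (k : ℝ) * (1 - p) - 2 * (1 - p ^ k) := by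
  obtain ⟨m, rfl⟩ : ∃ m, k = m + 3 := ⟨k - 3, by omega⟩
  have := part1le' m p hp hp1
  have e1 : m + 3 - 1 = m + 2 := by omega
  rw [e1]
  push_cast
  linarith

private lemma part1lt'' (k : ℕ) (hk : 3 ≤ k) (p : ℝ) (hp : 0 < p) (hp1 : p < 1) :
    (k : ℝ) * (1 - p) * (1 - p ^ (k - 1)) < 2 * (k : ℝ) * (1 - p) - 2 * (1 - p ^ k) := by
  obtain ⟨m, rfl⟩ : ∃ m, k = m + 3 := ⟨k - 3, by omega⟩
  have := part1lt' m p hp hp1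
  have e1 : m + 3 - 1 = m + 2 := by omega
  rw [e1]
  push_cast
  linarith

/-- For `k ≥ 3` and `0 < p ≤ 1`: `k(1-p)(1-p^(k-1)) ≤ 2k(1-p) - 2(1-p^k)`, strictly for
`p < 1`. Consequently, under the geometric rule with `0 < p < 1` (position `j`, 0-indexed,
worth `1-p^(k-1-j)`), a majority loser (last in more than half the races) has total score
strictly below the average total score, hence is never ranked first. -/
theorem stmt7 (k : ℕ) (hk : 3 ≤ k) :
    (∀ p : ℝ, 0 < p → p ≤ 1 →
      ((k : ℝ) * (1 - p) * (1 - p ^ (k - 1)) ≤ 2 * (k : ℝ) * (1 - p) - 2 * (1 - p ^ k)) ∧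
      (p < 1 →
        (k : ℝ) * (1 - p) * (1 - p ^ (k - 1)) < 2 * (k : ℝ) * (1 - p) - 2 * (1 - p ^ k))) ∧
    (∀ p : ℝ, 0 < p → p < 1 → ∀ n : ℕ, ∀ P : Fin n → Equiv.Perm (Fin k), ∀ c : Fin k,
      2 * (Finset.univ.filter fun i => (P i c : ℕ) = k - 1).card > n →
      TotalScore (fun j : Fin k => 1 - p ^ (k - 1 - (j : ℕ))) P c <
        (∑ a, TotalScore (fun j : Fin k => 1 - p ^ (k - 1 - (j : ℕ))) P a) / k ∧
      ∃ b : Fin k, TotalScore (fun j : Fin k => 1 - p ^ (k - 1 - (j : ℕ))) P c <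
        TotalScore (fun j : Fin k => 1 - p ^ (k - 1 - (j : ℕ))) P b) := by
  constructor
  · intro p hp hp1
    exact ⟨part1le'' k hk p hp hp1, fun h => part1lt'' k hk p hp h⟩
  · intro p hp hp1 n P c hmaj
    have hineq := part1le'' k hk p hp hp1.le
    set s : Fin k → ℝ := fun j : Fin k => 1 - p ^ (k - 1 - (j : ℕ)) with hs
    have hk0 : (0:ℝ) < k := by positivity
    -- geometric sum fact
    have geom_fac : (1 - p) * ∑ i ∈ Finset.range k, p ^ i = 1 - p ^ k := by
      have := geom_sum_mul p k
      nlinarith [this]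
    -- SG = ∑ j, s j
    set SS : ℝ := ∑ j : Fin k, s j with hSG
    have hSGval : SS = k - ∑ i ∈ Finset.range k, p ^ i := by
      rw [hSG, hs]
      simp only []
      rw [Fin.sum_univ_eq_sum_range (fun j => 1 - p ^ (k - 1 - j)) k]
      rw [Finset.sum_sub_distrib, Finset.sum_const, Finset.card_range, nsmul_eq_mul, mul_one]
      congr 1
      rw [← Finset.sum_range_reflect (fun j => p ^ j) k]
    -- total sum = n * SS
    have htot : ∑ a, TotalScore s P a = n * SS := by
      unfold TotalScore
      rw [Finset.sum_comm]
      have : ∀ i : Fin n, ∑ a, s (P i a) = SS := fun i => Equiv.sum_comp (P i) s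
      rw [Finset.sum_congr rfl (fun i _ => this i)]
      simp [mul_comm]
    set F := Finset.univ.filter fun i : Fin n => (P i c : ℕ) = k - 1 with hF
    set L := F.card with hL
    have hLn : L ≤ n := by
      calc L ≤ (Finset.univ : Finset (Fin n)).card := Finset.card_filter_le _ _
      _ = n := by simp
    have hx : (0:ℝ) < 1 - p ^ (k - 1) := by
      have : p ^ (k-1) < 1 := pow_lt_one₀ hp.le hp1 (by omega)
      linarith
    -- score bound
    have hbound : TotalScore s P c ≤ ((n:ℝ) - L) * (1 - p ^ (k - 1)) := by
      unfold TotalScore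
      rw [← Finset.sum_filter_add_sum_filter_not Finset.univ (fun i : Fin n => (P i c : ℕ) = k - 1)]
      have h1 : ∑ i ∈ F, s (P i c) = 0 := by
        apply Finset.sum_eq_zero
        intro i hi
        rw [hF, Finset.mem_filter] at hi
        rw [hs]
        simp [hi.2]
      have h2 : ∑ i ∈ Finset.univ.filter (fun i : Fin n => ¬ ((P i c : ℕ) = k - 1)), s (P i c)
          ≤ ((n:ℝ) - L) * (1 - p ^ (k - 1)) := by
        have hcard : (Finset.univ.filter (fun i : Fin n => ¬ ((P i c : ℕ) = k - 1))).card = n - L := by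
          rw [hL, hF, Finset.filter_not, Finset.card_sdiff_of_subset (Finset.filter_subset _ _)]
          simp
        calc ∑ i ∈ Finset.univ.filter (fun i : Fin n => ¬ ((P i c : ℕ) = k - 1)), s (P i c)
            ≤ ∑ i ∈ Finset.univ.filter (fun i : Fin n => ¬ ((P i c : ℕ) = k - 1)), (1 - p ^ (k - 1)) := by
              apply Finset.sum_le_sum
              intro i hi
              rw [hs]
              simp only [sub_le_sub_iff_left]
              exact pow_le_pow_of_le_one hp.le hp1.le (by omega)
          _ = ((n:ℝ) - L) * (1 - p ^ (k - 1)) := by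
              rw [Finset.sum_const, hcard, nsmul_eq_mul]
              congr 1
              push_cast [Nat.cast_sub hLn]
              ring
      rw [← hF, h1, zero_add]
      exact h2
    -- strict middle step
    have hstep1 : ((n:ℝ) - L) * (1 - p ^ (k - 1)) < (n:ℝ) / 2 * (1 - p ^ (k - 1)) := by
      apply mul_lt_mul_of_pos_right _ hx
      have : (n:ℝ) < 2 * L := by exact_mod_cast hmaj
      linarith
    -- k * x ≤ 2SS
    have hkx : (k:ℝ) * (1 - p ^ (k - 1)) ≤ 2 * SS := by
      have hmul : (1 - p) * ((k:ℝ) * (1 - p ^ (k - 1))) ≤ (1 - p) * (2 * SS) := by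
        have : (1 - p) * (2 * SS) = 2 * (k:ℝ) * (1 - p) - 2 * (1 - p ^ k) := by
          rw [hSGval]; nlinarith [geom_fac]
        rw [this]
        nlinarith [hineq]
      exact le_of_mul_le_mul_left hmul (by linarith)
    have hstep2 : (n:ℝ) / 2 * (1 - p ^ (k - 1)) ≤ (n : ℝ) * SS / k := by
      rw [div_mul_eq_mul_div, div_le_div_iff₀ (by norm_num) hk0]
      have hn0 : (0:ℝ) ≤ n := by positivity
      nlinarith [hkx]
    have main : TotalScore s P c < (∑ a, TotalScore s P a) / k := by
      rw [htot]
      calc TotalScore s P c ≤ ((n:ℝ) - L) * (1 - p ^ (k - 1)) := hbound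
        _ < (n:ℝ) / 2 * (1 - p ^ (k - 1)) := hstep1
        _ ≤ (n:ℝ) * SS / k := hstep2
    refine ⟨main, ?_⟩
    by_contra hcon
    push_neg at hcon
    have hsum_le : ∑ a, TotalScore s P a ≤ k * TotalScore s P c := by
      calc ∑ a, TotalScore s P a ≤ ∑ _a : Fin k, TotalScore s P c := Finset.sum_le_sum fun a _ => hcon a
        _ = k * TotalScore s P c := by rw [Finset.sum_const]; simp [mul_comm]
    have : (∑ a, TotalScore s P a) / k ≤ TotalScore s P c := by
      rw [div_le_iff₀ hk0]
      linarith
    linarith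
end

section
/- For any geometric scoring rule with parameter p>1 and any k ≥ 3, there exists a profile in which the majority loser is ranked first: for sufficiently large n, the inequality n·((k−2)p^k − k p^{k−1} + k p − k + 2) > (p^{k−1}−1)(p−1) holds, which implies the majority loser's total score n(k−1)(p^{k−1}+1)+1 exceeds the best other candidate's total n(p+1)(p^{k−2}+...+p+1)+p^{k−1}. -/
open Finset Equiv

lemma totalScore_comp_equiv_symm {ι : Type*} [Fintype ι] {n k : ℕ} (s : Fin k → ℝ)
    (P : ι → Perm (Fin k)) (e : ι ≃ Fin n) (a : Fin k) :
    TotalScore s (P ∘ e.symm) a = ∑ i, s (P i a) :=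
  e.symm.sum_comp fun i => s (P i a)

section GeometricGap

-- The last candidate's score minus any other candidate's score over one round of `2K` races.
def geomGap (p : ℝ) (K : ℕ) : ℝ := K * (p ^ K + 1) - (p + 1) * ∑ i ∈ range K, p ^ i

lemma geomGap_eq_sum (p : ℝ) (K : ℕ) :
    geomGap p K = ∑ i ∈ range K, (p ^ (i + 1) - 1) * (p ^ (K - 1 - i) - 1) := by
  have hterm : ∀ i ∈ range K, (p ^ (i + 1) - 1) * (p ^ (K - 1 - i) - 1) =
      (p ^ K + 1) - p * p ^ i - p ^ (K - 1 - i) := fun i hi => by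
    have hpow : p ^ (i + 1) * p ^ (K - 1 - i) = p ^ K := by
      rw [← pow_add]; congr 1; have := mem_range.1 hi; omega
    rw [← hpow, pow_succ]; ring
  rw [sum_congr rfl hterm, sum_sub_distrib, sum_sub_distrib, sum_range_reflect (p ^ ·) K,
    sum_const, card_range, nsmul_eq_mul, ← mul_sum, geomGap]
  ring

lemma geomGap_pos {p : ℝ} (hp : 1 < p) {K : ℕ} (hK : 2 ≤ K) : 0 < geomGap p K := by
  rw [geomGap_eq_sum]
  refine sum_pos' (fun i _ => mul_nonneg ?_ ?_) ⟨0, mem_range.2 (by omega), mul_pos ?_ ?_⟩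
  · exact sub_nonneg.2 (one_le_pow₀ hp.le)
  · exact sub_nonneg.2 (one_le_pow₀ hp.le)
  · exact sub_pos.2 (one_lt_pow₀ hp (by omega))
  · exact sub_pos.2 (one_lt_pow₀ hp (by omega))

lemma sub_one_mul_geomGap (p : ℝ) (K : ℕ) :
    (p - 1) * geomGap p K =
      ((K + 1 : ℕ) - 2) * p ^ (K + 1) - ((K + 1 : ℕ) : ℝ) * p ^ K + ((K + 1 : ℕ) : ℝ) * p
        - ((K + 1 : ℕ) : ℝ) + 2 := by
  have := geom_sum_mul p K
  simp only [geomGap]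
  push_cast
  linear_combination (-(p + 1)) * this

lemma eventually_lt_natCast_mul_geomGap {p : ℝ} (hp : 1 < p) {K : ℕ} (hK : 2 ≤ K) (a : ℝ) :
    ∀ᶠ n : ℕ in Filter.atTop, a < n * geomGap p K :=
  (tendsto_natCast_atTop_atTop.atTop_mul_const (geomGap_pos hp hK)).eventually_gt_atTop a

end GeometricGap

section Races

variable {K : ℕ}

def lastRace (σ : Perm (Fin K)) : Perm (Fin (K + 1)) :=
  finSuccEquivLast.symm.permCongr σ.optionCongr

def firstRace (σ : Perm (Fin K)) : Perm (Fin (K + 1)) :=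
  (lastRace σ).trans (finRotate (K + 1))

@[simp] lemma lastRace_last (σ : Perm (Fin K)) : lastRace σ (Fin.last K) = Fin.last K := by
  simp [lastRace, finSuccEquivLast_last]

@[simp] lemma lastRace_castSucc (σ : Perm (Fin K)) (i : Fin K) :
    lastRace σ i.castSucc = (σ i).castSucc := by
  simp [lastRace, finSuccEquivLast_castSucc, finSuccEquivLast_symm_some]

@[simp] lemma firstRace_last (σ : Perm (Fin K)) : firstRace σ (Fin.last K) = 0 := by
  simp [firstRace]

@[simp] lemma firstRace_castSucc (σ : Perm (Fin K)) (i : Fin K) :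
    firstRace σ i.castSucc = (σ i).succ := by
  simp [firstRace, Fin.coeSucc_eq_succ]

end Races

section Profile

variable (n K : ℕ) [NeZero K]

-- `none` is the final race in the order `0 ≻ 1 ≻ ⋯ ≻ K`; `some (r, m, t)` is the race of round `r`
-- in which the candidates other than `Fin.last K` are cyclically shifted by `m`, with `Fin.last K`
-- placed first if `t` and last otherwise.
def profile : Option (Fin n × Fin K × Bool) → Perm (Fin (K + 1))
  | none => 1
  | some (_, m, true) => firstRace (Equiv.addRight m)
  | some (_, m, false) => lastRace (Equiv.addRight m)

lemma sum_profile {M : Type*} [AddCommMonoid M] (f : Perm (Fin (K + 1)) → M) :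
    ∑ x, f (profile n K x) =
      f 1 + n • ∑ m : Fin K,
        (f (firstRace (Equiv.addRight m)) + f (lastRace (Equiv.addRight m))) := by
  simp [Fintype.sum_option, Fintype.sum_prod_type, profile]

lemma card_profile_last :
    #{x | (profile n K x (Fin.last K) : ℕ) = K} = n * K + 1 := by
  rw [card_filter, sum_profile n K (fun π => if (π (Fin.last K) : ℕ) = K then 1 else 0)]
  simp only [Perm.coe_one, id_eq, Fin.val_last, ↓reduceIte, firstRace_last, Fin.val_zero,
    (NeZero.ne K).symm, lastRace_last, zero_add, sum_const, card_univ, Fintype.card_fin,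
    smul_eq_mul, mul_one]
  ring

end Profile

section Scores

variable (p : ℝ) (n K : ℕ)

def geomScore (j : Fin (K + 1)) : ℝ := p ^ (K - (j : ℕ))

lemma geomScore_succ_add_geomScore_castSucc (j : Fin K) :
    geomScore p K j.succ + geomScore p K j.castSucc = (p + 1) * p ^ (K - 1 - (j : ℕ)) := by
  have hj : K - (j : ℕ) = K - 1 - j + 1 := by omega
  simp only [geomScore, Fin.val_succ, Fin.val_castSucc, hj, pow_succ]
  rw [show K - (j + 1) = K - 1 - (j : ℕ) by omega]
  ring

variable [NeZero K]

lemma sum_geomScore_profile_last :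
    ∑ x, geomScore p K (profile n K x (Fin.last K)) = n * K * (p ^ K + 1) + 1 := by
  rw [sum_profile n K (fun π => geomScore p K (π (Fin.last K)))]
  simp only [geomScore, Perm.coe_one, id_eq, Fin.val_last, tsub_self, pow_zero, firstRace_last,
    Fin.val_zero, tsub_zero, lastRace_last, sum_const, card_univ, Fintype.card_fin, smul_add,
    nsmul_eq_mul, mul_one]
  ring

lemma sum_geomScore_profile_castSucc (i : Fin K) :
    ∑ x, geomScore p K (profile n K x i.castSucc) =
      n * ((p + 1) * ∑ j ∈ range K, p ^ j) + p ^ (K - (i : ℕ)) := by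
  have hshift : ∑ m : Fin K, p ^ (K - 1 - ((i + m : Fin K) : ℕ)) = ∑ j ∈ range K, p ^ j :=
    (Equiv.sum_comp (Equiv.addLeft i) (fun j : Fin K => p ^ (K - 1 - (j : ℕ)))).trans <| by
      rw [Fin.sum_univ_eq_sum_range (fun j => p ^ (K - 1 - j)), sum_range_reflect (p ^ ·) K]
  rw [sum_profile n K (fun π => geomScore p K (π i.castSucc))]
  simp only [firstRace_castSucc, lastRace_castSucc, Equiv.coe_addRight,
    geomScore_succ_add_geomScore_castSucc, ← mul_sum, hshift]
  simp only [geomScore, Perm.coe_one, id_eq, Fin.val_castSucc, nsmul_eq_mul]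
  ring

end Scores

lemma exists_profile_majority_loser_wins {p : ℝ} (hp : 1 ≤ p) (n K : ℕ) [NeZero K]
    (hn : p ^ K - 1 < n * geomGap p K) :
    ∃ N : ℕ, ∃ P : Fin N → Perm (Fin (K + 1)), ∃ c : Fin (K + 1),
      2 * #{i | (P i c : ℕ) = K} > N ∧
      ∀ b, b ≠ c → TotalScore (geomScore p K) P b < TotalScore (geomScore p K) P c := by
  let e := Fintype.equivFin (Option (Fin n × Fin K × Bool))
  refine ⟨_, profile n K ∘ e.symm, Fin.last K, ?_, fun b hb => ?_⟩
  · have hcount : #{i | (profile n K (e.symm i) (Fin.last K) : ℕ) = K} = n * K + 1 := by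
      rw [← card_profile_last n K, card_filter, card_filter]
      exact e.symm.sum_comp fun x => if (profile n K x (Fin.last K) : ℕ) = K then 1 else 0
    rw [Function.comp_def, hcount, Fintype.card_option, Fintype.card_prod, Fintype.card_prod,
      Fintype.card_fin, Fintype.card_fin, Fintype.card_bool]
    linarith
  · obtain ⟨i, rfl⟩ := Fin.exists_castSucc_eq.2 hb
    rw [totalScore_comp_equiv_symm, totalScore_comp_equiv_symm, sum_geomScore_profile_last,
      sum_geomScore_profile_castSucc]
    have hpow : p ^ (K - (i : ℕ)) ≤ p ^ K := pow_le_pow_right₀ hp (Nat.sub_le K i)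
    rw [geomGap] at hn
    linarith

/-- For any geometric rule with `p > 1` (position `j`, 0-indexed, worth `p^(k-1-j)`) and
`k ≥ 3`: for all sufficiently large `n` the inequality
`n·((k-2)p^k - k·p^(k-1) + k·p - k + 2) > (p^(k-1)-1)(p-1)` holds, and there exists a
profile in which a majority loser is ranked strictly first. -/
theorem stmt9 (p : ℝ) (hp : 1 < p) (k : ℕ) (hk : 3 ≤ k) :
    (∃ N : ℕ, ∀ n : ℕ, N ≤ n →
      (n : ℝ) * (((k : ℝ) - 2) * p ^ k - (k : ℝ) * p ^ (k - 1) + (k : ℝ) * p - (k : ℝ) + 2) >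
        (p ^ (k - 1) - 1) * (p - 1)) ∧
    ∃ n : ℕ, ∃ P : Fin n → Equiv.Perm (Fin k), ∃ c : Fin k,
      2 * (Finset.univ.filter fun i => (P i c : ℕ) = k - 1).card > n ∧
      ∀ b, b ≠ c →
        TotalScore (fun j : Fin k => p ^ (k - 1 - (j : ℕ))) P b <
          TotalScore (fun j : Fin k => p ^ (k - 1 - (j : ℕ))) P c := by
  obtain ⟨K, rfl⟩ : ∃ K, k = K + 1 := ⟨k - 1, by omega⟩
  have hK : 2 ≤ K := by omega
  have : NeZero K := ⟨by omega⟩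
  obtain ⟨N, hN⟩ := Filter.eventually_atTop.1 (eventually_lt_natCast_mul_geomGap hp hK (p ^ K - 1))
  simp only [Nat.add_sub_cancel]
  refine ⟨⟨N, fun n hn => ?_⟩, exists_profile_majority_loser_wins hp.le N K (hN N le_rfl)⟩
  rw [gt_iff_lt, ← sub_one_mul_geomGap, mul_left_comm, mul_comm _ (p - 1)]
  exact mul_lt_mul_of_pos_left (hN n hn) (sub_pos.2 hp)
end

section
/- For odd k ≥ 3 and any real s_k < 0, the scoring vector (k−1, k−2, ..., 2, 1, s_k) fails reversal symmetry: in the profile of k−1 races where candidate a_1 always finishes in the middle position (k+1)/2 and each other candidate occupies each non-middle position exactly once, a_1's total (k−1)²/2 strictly exceeds every other candidate's total (k−1)²/2 + s_k, and the same holds in the reversed profile, so a_1 is the unique winner of both. -/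
/-- The reversed profile: every race order is inverted (position `j` becomes `k-1-j`). -/
def revProfile {n k : ℕ} (P : Fin n → Equiv.Perm (Fin k)) : Fin n → Equiv.Perm (Fin k) :=
  fun i => (P i).trans Fin.revPerm

/-- For odd `k ≥ 3` and a last-place score `sk < 0` (so `sk < 1`, `sk ≠ 0`), the scoring
vector `(k-1, k-2, ..., 2, 1, sk)` fails reversal symmetry: in the profile of `k-1` races
where `a` is always in the middle position `(k-1)/2` (0-indexed) and every other candidate
occupies each non-middle position exactly once, `a`'s total is `(k-1)²/2`, every other
candidate's total is `(k-1)²/2 + sk`, and `a` is the unique winner of both the profile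
and its reversal. -/
theorem stmt11 (k : ℕ) (hk : 3 ≤ k) (hodd : Odd k) (sk : ℝ) (hsk : sk < 0) :
    ∃ P : Fin (k-1) → Equiv.Perm (Fin k), ∃ a : Fin k,
      (∀ i, (P i a : ℕ) = (k - 1) / 2) ∧
      (∀ b, b ≠ a → ∀ j : Fin k, (j : ℕ) ≠ (k - 1) / 2 → ∃! i, P i b = j) ∧
      TotalScore (fun j : Fin k => if (j : ℕ) = k - 1 then sk else (k : ℝ) - 1 - (j : ℕ)) P a
        = ((k : ℝ) - 1) ^ 2 / 2 ∧
      (∀ b, b ≠ a →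
        TotalScore (fun j : Fin k => if (j : ℕ) = k - 1 then sk else (k : ℝ) - 1 - (j : ℕ)) P b
          = ((k : ℝ) - 1) ^ 2 / 2 + sk) ∧
      (∀ b, b ≠ a →
        TotalScore (fun j : Fin k => if (j : ℕ) = k - 1 then sk else (k : ℝ) - 1 - (j : ℕ)) P b
          < TotalScore (fun j : Fin k => if (j : ℕ) = k - 1 then sk else (k : ℝ) - 1 - (j : ℕ)) P a) ∧
      (∀ b, b ≠ a →
        TotalScore (fun j : Fin k => if (j : ℕ) = k - 1 then sk else (k : ℝ) - 1 - (j : ℕ))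
            (revProfile P) b
          < TotalScore (fun j : Fin k => if (j : ℕ) = k - 1 then sk else (k : ℝ) - 1 - (j : ℕ))
            (revProfile P) a) := by
  obtain ⟨m, rfl⟩ := hodd
  have hm : 1 ≤ m := by omega
  haveI : NeZero (2 * m) := ⟨by omega⟩
  set mid : Fin (2 * m + 1) := ⟨m, by omega⟩ with hmid
  set f := finSuccAboveEquiv mid with hf
  set s : Fin (2 * m + 1) → ℝ :=
    fun j => if (j : ℕ) = 2 * m + 1 - 1 then sk else ((2 * m + 1 : ℕ) : ℝ) - 1 - (j : ℕ) with hs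
  set P : Fin (2 * m + 1 - 1) → Equiv.Perm (Fin (2 * m + 1)) :=
    fun i => Equiv.Perm.extendDomain (Equiv.addRight (show Fin (2 * m) from i)) f with hP
  have hPmid : ∀ i, P i mid = mid := fun i =>
    Equiv.Perm.extendDomain_apply_not_subtype _ f (by simp)
  have hPb : ∀ (i : Fin (2 * m)) (b : Fin (2 * m + 1)) (hb : b ≠ mid),
      P i b = (f (f.symm ⟨b, hb⟩ + i) : Fin (2 * m + 1)) := by
    intro i b hb
    exact Equiv.Perm.extendDomain_apply_subtype _ f hb
  have hsmid : s mid = (m : ℝ) := by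
    simp only [hs, hmid]
    rw [if_neg (by omega)]
    push_cast
    ring
  -- sum of s over succAbove
  have hsum : ∑ t : Fin (2 * m), s (mid.succAbove t) = sk + 2 * (m : ℝ) ^ 2 := by
    have h1 : ∑ j : Fin (2 * m + 1), s j = s mid + ∑ t : Fin (2 * m), s (mid.succAbove t) :=
      Fin.sum_univ_succAbove s mid
    have h2 : ∑ j : Fin (2 * m + 1), s j = sk + 2 * (m : ℝ) ^ 2 + m := by
      rw [Fin.sum_univ_castSucc]
      have hlast : s (Fin.last (2 * m)) = sk := by simp [hs]
      have hcs : ∀ j : Fin (2 * m), s j.castSucc = 2 * (m : ℝ) - (j : ℕ) := by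
        intro j
        simp only [hs, Fin.coe_castSucc]
        rw [if_neg (by omega)]
        push_cast
        ring
      rw [hlast]
      rw [Finset.sum_congr rfl (fun j _ => hcs j)]
      rw [Finset.sum_sub_distrib, Finset.sum_const]
      have hgauss : ∑ j : Fin (2 * m), ((j : ℕ) : ℝ) = (m : ℝ) * (2 * m - 1) := by
        have := Finset.sum_range_id_mul_two (2 * m)
        have h3 : ∑ j : Fin (2 * m), ((j : ℕ) : ℝ) = ((∑ i ∈ Finset.range (2 * m), i : ℕ) : ℝ) := by
          rw [Fin.sum_univ_eq_sum_range]
          push_cast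
          rfl
        have h4 := congrArg (Nat.cast : ℕ → ℝ) this
        push_cast [Nat.cast_sub (by omega : 1 ≤ 2 * m)] at h4
        push_cast at h3
        rw [h3]
        nlinarith [h4]
      rw [hgauss]
      simp only [Finset.card_univ, Fintype.card_fin]
      push_cast
      ring
    rw [h1, hsmid] at h2
    linarith
  -- total for b ≠ mid
  have hTb : ∀ b, b ≠ mid → TotalScore s P b = sk + 2 * (m : ℝ) ^ 2 := by
    intro b hb
    have : TotalScore s P b = ∑ i : Fin (2 * m), s ((f (f.symm ⟨b, hb⟩ + i) : Fin (2 * m + 1))) :=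
      Finset.sum_congr rfl (fun i _ => by rw [hPb i b hb])
    rw [this]
    calc ∑ i : Fin (2 * m), s ((f (f.symm ⟨b, hb⟩ + i) : Fin (2 * m + 1)))
        = ∑ i : Fin (2 * m),
            (fun t : Fin (2 * m) => s ((f t : Fin (2 * m + 1))))
              (Equiv.addLeft (f.symm ⟨b, hb⟩) i) := rfl
      _ = ∑ t : Fin (2 * m), s ((f t : Fin (2 * m + 1))) :=
            Equiv.sum_comp (Equiv.addLeft (f.symm ⟨b, hb⟩))
              (fun t : Fin (2 * m) => s ((f t : Fin (2 * m + 1))))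
      _ = ∑ t : Fin (2 * m), s (mid.succAbove t) := by
            refine Finset.sum_congr rfl fun t _ => ?_
            rw [hf, finSuccAboveEquiv_apply]
      _ = sk + 2 * (m : ℝ) ^ 2 := hsum
  have hTbrev : ∀ b, b ≠ mid →
      TotalScore s (revProfile P) b = sk + 2 * (m : ℝ) ^ 2 := by
    intro b hb
    have : TotalScore s (revProfile P) b
        = ∑ i : Fin (2 * m), s (Fin.rev ((f (f.symm ⟨b, hb⟩ + i) : Fin (2 * m + 1)))) :=
      Finset.sum_congr rfl (fun i _ => by
        show s (Fin.rev (P i b)) = _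
        rw [hPb i b hb])
    rw [this]
    have hrevmid : Fin.rev mid = mid := by
      rw [Fin.ext_iff, Fin.val_rev]
      simp only [hmid]
      omega
    have hstep : ∀ t : Fin (2 * m),
        s (Fin.rev ((f t : Fin (2 * m + 1)))) = s (mid.succAbove t.rev) := by
      intro t
      rw [hf, finSuccAboveEquiv_apply]
      show s (Fin.rev (mid.succAbove t)) = _
      rw [Fin.rev_succAbove, hrevmid]
    calc ∑ i : Fin (2 * m), s (Fin.rev ((f (f.symm ⟨b, hb⟩ + i) : Fin (2 * m + 1))))
        = ∑ i : Fin (2 * m),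
            (fun t : Fin (2 * m) => s (Fin.rev ((f t : Fin (2 * m + 1)))))
              (Equiv.addLeft (f.symm ⟨b, hb⟩) i) := rfl
      _ = ∑ t : Fin (2 * m), s (Fin.rev ((f t : Fin (2 * m + 1)))) :=
            Equiv.sum_comp (Equiv.addLeft (f.symm ⟨b, hb⟩))
              (fun t : Fin (2 * m) => s (Fin.rev ((f t : Fin (2 * m + 1)))))
      _ = ∑ t : Fin (2 * m), s (mid.succAbove t.rev) :=
            Finset.sum_congr rfl fun t _ => hstep t
      _ = ∑ t : Fin (2 * m),
            (fun u : Fin (2 * m) => s (mid.succAbove u)) (Fin.revPerm t) := rfl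
      _ = ∑ t : Fin (2 * m), s (mid.succAbove t) :=
            Equiv.sum_comp (Fin.revPerm : Equiv.Perm (Fin (2 * m)))
              (fun u : Fin (2 * m) => s (mid.succAbove u))
      _ = sk + 2 * (m : ℝ) ^ 2 := hsum
  have hTa : TotalScore s P mid = 2 * (m : ℝ) ^ 2 := by
    unfold TotalScore
    rw [Finset.sum_congr rfl (fun i _ => by rw [hPmid i, hsmid])]
    rw [Finset.sum_const]
    simp only [Finset.card_univ, Fintype.card_fin]
    push_cast
    ring
  have hTarev : TotalScore s (revProfile P) mid = 2 * (m : ℝ) ^ 2 := by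
    unfold TotalScore
    have hrevmid : Fin.rev mid = mid := by
      rw [Fin.ext_iff, Fin.val_rev]; simp only [hmid]; omega
    rw [Finset.sum_congr rfl (fun i _ => by
      show s (Fin.rev (P i mid)) = m
      rw [hPmid i, hrevmid, hsmid])]
    rw [Finset.sum_const]
    simp only [Finset.card_univ, Fintype.card_fin]
    push_cast
    ring
  have hksq : ((↑(2 * m + 1) : ℝ) - 1) ^ 2 / 2 = 2 * (m : ℝ) ^ 2 := by
    push_cast; ring
  refine ⟨P, mid, ?_, ?_, ?_, ?_, ?_, ?_⟩
  · intro i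
    rw [hPmid i]
    simp only [hmid]
    omega
  · intro b hb j hj
    have hj' : j ≠ mid := by
      simp only [ne_eq, Fin.ext_iff, hmid]
      omega
    refine ⟨(f.symm ⟨j, hj'⟩ - f.symm ⟨b, hb⟩ : Fin (2 * m)), ?_, ?_⟩
    · show P (f.symm ⟨j, hj'⟩ - f.symm ⟨b, hb⟩ : Fin (2 * m)) b = j
      rw [hPb _ b hb]
      have h5 : f.symm ⟨b, hb⟩ + (f.symm ⟨j, hj'⟩ - f.symm ⟨b, hb⟩) = f.symm ⟨j, hj'⟩ := by
        rw [add_comm, sub_add_cancel]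
      rw [h5, Equiv.apply_symm_apply]
    · intro i hi
      have hi' : P (show Fin (2 * m) from i) b = j := hi
      rw [hPb _ b hb] at hi'
      have h6 : f (f.symm ⟨b, hb⟩ + (show Fin (2 * m) from i)) = ⟨j, hj'⟩ := Subtype.ext hi'
      have h2 := congrArg f.symm h6
      rw [Equiv.symm_apply_apply] at h2
      show (show Fin (2 * m) from i) = f.symm ⟨j, hj'⟩ - f.symm ⟨b, hb⟩
      rw [eq_sub_iff_add_eq, add_comm]
      exact h2
  · exact hTa.trans (by rw [hksq])
  · intro b hb
    rw [hTb b hb, hksq]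
    ring
  · intro b hb
    rw [hTb b hb, hTa]
    linarith
  · intro b hb
    rw [hTbrev b hb, hTarev]
    linarith
end

section
/- Borda is the unique positional scoring rule (up to linear equivalence of scores) that satisfies independence of unanimous losers and reversal symmetry. -/
/-- Reversal symmetry: whenever (with at least two candidates) a candidate is the unique
winner of a profile, that candidate is not the unique winner of the reversed profile. -/
def ReversalSymmetry (m : ℕ) (s : ∀ k, Fin k → ℝ) : Prop :=
  ∀ k, 2 ≤ k → k ≤ m → ∀ n : ℕ, ∀ P : Fin n → Equiv.Perm (Fin k), ∀ a : Fin k,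
    (∀ b, b ≠ a → TotalScore (s k) P b < TotalScore (s k) P a) →
    ¬ (∀ b, b ≠ a →
        TotalScore (s k) (revProfile P) b < TotalScore (s k) (revProfile P) a)

def IsBordaEquivalent {k : ℕ} (u : Fin k → ℝ) : Prop :=
  ∃ α : ℝ, 0 < α ∧ ∃ β : ℝ, ∀ j : Fin k, u j = α * ((k : ℝ) - 1 - (j : ℕ)) + β

def IsArithProg {N : ℕ} (u : Fin N → ℝ) : Prop :=
  ∀ j (h : j + 2 < N), u ⟨j, by omega⟩ + u ⟨j + 2, h⟩ = 2 * u ⟨j + 1, by omega⟩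

def positionSum {n k : ℕ} (P : Fin n → Equiv.Perm (Fin k)) (a : Fin k) : ℝ :=
  ∑ i, ((P i a : ℕ) : ℝ)

theorem IsArithProg.eq_add_mul {N : ℕ} {u : Fin (N + 2) → ℝ} (hu : IsArithProg u)
    (j : Fin (N + 2)) : u j = u 0 + j * (u 1 - u 0) := by
  obtain ⟨j, hj⟩ := j
  induction j using Nat.twoStepInduction with
  | zero => simp
  | one => simp
  | more j ih₀ ih₁ =>
    have := hu j hj
    rw [ih₀ (by omega), ih₁ (by omega)] at this
    push_cast at this ⊢
    linarith

theorem IsArithProg.isBordaEquivalent {N : ℕ} {u : Fin (N + 2) → ℝ} (hu : IsArithProg u)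
    (hlast : u (Fin.last (N + 1)) < u (Fin.last N).castSucc) : IsBordaEquivalent u := by
  have hd : u 1 - u 0 < 0 := by
    rw [hu.eq_add_mul, hu.eq_add_mul (Fin.last N).castSucc] at hlast
    simp only [Fin.val_last, Fin.val_castSucc] at hlast
    push_cast at hlast
    linarith
  refine ⟨u 0 - u 1, by linarith, u 0 + (N + 1) * (u 1 - u 0), fun j => ?_⟩
  rw [hu.eq_add_mul j]
  push_cast
  ring

theorem IsBordaEquivalent.isArithProg {N : ℕ} {u : Fin N → ℝ} (hu : IsBordaEquivalent u) :
    IsArithProg u := by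
  obtain ⟨α, -, β, hu⟩ := hu
  intro j h
  simp only [hu]
  push_cast
  ring

theorem IsBordaEquivalent.add_rev_eq {k : ℕ} {u : Fin k → ℝ} (hu : IsBordaEquivalent u)
    (p q : Fin k) : u p + u p.rev = u q + u q.rev := by
  obtain ⟨α, -, β, hu⟩ := hu
  have hrev : ∀ j : Fin k, ((j.rev : ℕ) : ℝ) = k - 1 - j := fun j => by
    rw [Fin.val_rev, Nat.cast_sub (by omega)]
    push_cast
    ring
  simp only [hu, hrev]
  ring

theorem IsArithProg.of_castSucc {k : ℕ} {u : Fin (k + 2) → ℝ}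
    (hu : IsArithProg (u ∘ Fin.castSucc))
    (hrev : ∀ p q : Fin (k + 2), u p + u p.rev = u q + u q.rev) : IsArithProg u := by
  intro j hj
  rcases Nat.lt_or_ge (j + 2) (k + 1) with hj' | hj'
  · exact hu j hj'
  obtain rfl : k = j + 1 := by omega
  have h₀ := hu.eq_add_mul ⟨j, by omega⟩
  have h₁ := hu.eq_add_mul ⟨j + 1, by omega⟩
  have h01 : u 0 + u ⟨j + 2, hj⟩ = u 1 + u ⟨j + 1, by omega⟩ := hrev 0 1
  simp only [Function.comp_apply, Fin.castSucc_zero, Fin.castSucc_one, Fin.castSucc_mk] at h₀ h₁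
  push_cast at h₀ h₁
  linarith

section IndepUnanimousLosers

variable {m : ℕ} {s : ∀ k, Fin k → ℝ}

theorem score_last_lt_of_indepUnanimousLosers (hI : IndepUnanimousLosers m s) {k : ℕ}
    (hk : k + 1 ≤ m) {a : Fin (k + 1)} (ha : a ≠ Fin.last k) :
    s (k + 1) (Fin.last k) < s (k + 1) a := by
  simpa [TotalScore] using
    (hI k hk 1 one_pos (fun _ => 1) (Fin.last k) (fun _ => Fin.val_last k)).1 a ha

theorem totalScore_eq_of_rTotalL_eq (hI : IndepUnanimousLosers m s) {k n : ℕ}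
    (hk : k + 1 ≤ m) (hn : 0 < n) {P : Fin n → Equiv.Perm (Fin (k + 1))} {c : Fin (k + 1)}
    (hc : ∀ i, (P i c : ℕ) = k) {a b : Fin (k + 1)} (ha : a ≠ c) (hb : b ≠ c)
    (h : RTotalL (s k) P a = RTotalL (s k) P b) :
    TotalScore (s (k + 1)) P a = TotalScore (s (k + 1)) P b :=
  have hiff := (hI k hk n hn P c hc).2
  le_antisymm ((hiff a b ha hb).2 h.le) ((hiff b a hb ha).2 h.ge)

theorem IsArithProg.castSucc_of_indepUnanimousLosers (hI : IndepUnanimousLosers m s) {k : ℕ}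
    (hk : k + 1 ≤ m) (hs : IsArithProg (s k)) : IsArithProg (s (k + 1) ∘ Fin.castSucc) := by
  intro j hj
  let a : Fin (k + 1) := ⟨j, by omega⟩
  let b : Fin (k + 1) := ⟨j + 1, by omega⟩
  let e : Fin (k + 1) := ⟨j + 2, by omega⟩
  -- Without the last candidate, `a` scores `s k a + s k e = 2 * s k b`, exactly the score of `b`.
  let P : Fin 2 → Equiv.Perm (Fin (k + 1)) := ![1, Equiv.swap a e]
  have hswap_b : Equiv.swap a e b = b :=
    Equiv.swap_apply_of_ne_of_ne (Fin.ne_of_val_ne (show j + 1 ≠ j by omega))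
      (Fin.ne_of_val_ne (show j + 1 ≠ j + 2 by omega))
  have hswap_last : Equiv.swap a e (Fin.last k) = Fin.last k :=
    Equiv.swap_apply_of_ne_of_ne (Fin.ne_of_val_ne (show k ≠ j by omega))
      (Fin.ne_of_val_ne (show k ≠ j + 2 by omega))
  have hc : ∀ i, (P i (Fin.last k) : ℕ) = k := by
    intro i
    fin_cases i <;> simp [P, hswap_last]
  have hR : RTotalL (s k) P a = RTotalL (s k) P b := by
    simpa [RTotalL, Fin.sum_univ_two, P, hswap_b, a, b, e, hj, show j < k by omega,
      show j + 1 < k by omega, two_mul] using hs j hj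
  have hT := totalScore_eq_of_rTotalL_eq hI hk two_pos hc
    (Fin.ne_of_val_ne (show j ≠ k by omega)) (Fin.ne_of_val_ne (show j + 1 ≠ k by omega)) hR
  simp only [TotalScore, Fin.sum_univ_two, Matrix.cons_val_zero, Matrix.cons_val_one,
    Equiv.Perm.coe_one, id_eq, Equiv.swap_apply_left, hswap_b, P] at hT
  simp only [Function.comp_apply, Fin.castSucc_mk]
  linarith

end IndepUnanimousLosers

theorem totalScore_add {n k : ℕ} (u v : Fin k → ℝ) (P : Fin n → Equiv.Perm (Fin k))
    (x : Fin k) : TotalScore (u + v) P x = TotalScore u P x + TotalScore v P x :=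
  Finset.sum_add_distrib

theorem totalScore_append_s12 {n₁ n₂ k : ℕ} (u : Fin k → ℝ) (P : Fin n₁ → Equiv.Perm (Fin k))
    (Q : Fin n₂ → Equiv.Perm (Fin k)) (x : Fin k) :
    TotalScore u (Fin.append P Q) x = TotalScore u P x + TotalScore u Q x := by
  simp [TotalScore, Fin.sum_univ_add]

theorem totalScore_revProfile {n k : ℕ} (u : Fin k → ℝ) (P : Fin n → Equiv.Perm (Fin k))
    (x : Fin k) : TotalScore u (revProfile P) x = TotalScore (u ∘ Fin.rev) P x :=
  rfl

theorem totalScore_append_revProfile {n k : ℕ} (u : Fin k → ℝ)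
    (P : Fin n → Equiv.Perm (Fin k)) (x : Fin k) :
    TotalScore u (Fin.append P (revProfile P)) x = TotalScore (u + u ∘ Fin.rev) P x := by
  rw [totalScore_append_s12, totalScore_revProfile, totalScore_add]

theorem totalScore_revProfile_append_revProfile {n k : ℕ} (u : Fin k → ℝ)
    (P : Fin n → Equiv.Perm (Fin k)) (x : Fin k) :
    TotalScore u (revProfile (Fin.append P (revProfile P))) x =
      TotalScore u (Fin.append P (revProfile P)) x := by
  rw [totalScore_revProfile, totalScore_append_revProfile, totalScore_append_revProfile,
    Function.comp_assoc, Fin.rev_involutive.comp_self, Function.comp_id, add_comm]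

theorem totalScore_revProfile_of_add_rev_eq {n k : ℕ} {u : Fin k → ℝ} {C : ℝ}
    (hu : ∀ j, u j + u j.rev = C) (P : Fin n → Equiv.Perm (Fin k)) (x : Fin k) :
    TotalScore u (revProfile P) x = n * C - TotalScore u P x := by
  have h : TotalScore (u + u ∘ Fin.rev) P x = n * C := by simp [TotalScore, hu]
  rw [totalScore_add, ← totalScore_revProfile] at h
  linarith

theorem exists_profile_unique_winner {k : ℕ} {W : Fin k → ℝ} {p q : Fin k}
    (hmax : ∀ r, W r ≤ W p) (hq : W q < W p) :
    ∃ P : Fin k → Equiv.Perm (Fin k), ∀ b, b ≠ p → TotalScore W P b < TotalScore W P p := by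
  have hpq : p ≠ q := fun h => hq.ne (h ▸ rfl)
  -- Voter `b` keeps the maximiser `p` in place and moves candidate `b` to the lower position `q`.
  let P : Fin k → Equiv.Perm (Fin k) := fun b => if b = p then 1 else Equiv.swap b q
  have hPp : ∀ i, P i p = p := by
    intro i
    by_cases hi : i = p
    · simp [P, hi]
    · simp only [P, if_neg hi]
      exact Equiv.swap_apply_of_ne_of_ne (Ne.symm hi) hpq
  refine ⟨P, fun b hb => Finset.sum_lt_sum (fun i _ => ?_) ⟨b, Finset.mem_univ b, ?_⟩⟩
  · rw [hPp]
    exact hmax _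
  · rw [hPp]
    simpa [P, hb] using hq

theorem reversalSymmetry_iff {m : ℕ} {s : ∀ k, Fin k → ℝ} :
    ReversalSymmetry m s ↔
      ∀ k, 2 ≤ k → k ≤ m → ∀ p q : Fin k, s k p + s k p.rev = s k q + s k q.rev := by
  constructor
  · intro hR k hk2 hkm
    let W : Fin k → ℝ := s k + s k ∘ Fin.rev
    have : Nonempty (Fin k) := ⟨⟨0, by omega⟩⟩
    obtain ⟨p, hp⟩ := Finite.exists_max W
    suffices h : ∀ q, W q = W p from fun q r => (h q).trans (h r).symm
    intro q
    by_contra hne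
    obtain ⟨P, hwin⟩ := exists_profile_unique_winner hp (lt_of_le_of_ne (hp q) hne)
    have hscore := totalScore_append_revProfile (s k) P
    refine hR k hk2 hkm _ (Fin.append P (revProfile P)) p (fun b hb => ?_) fun b hb => ?_
    · rw [hscore, hscore]
      exact hwin b hb
    · rw [totalScore_revProfile_append_revProfile, totalScore_revProfile_append_revProfile,
        hscore, hscore]
      exact hwin b hb
  · intro h k hk2 hkm n P a hwin hwin_rev
    have : Nontrivial (Fin k) := Fin.nontrivial_iff_two_le.mpr hk2
    obtain ⟨b, hb⟩ := exists_ne a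
    have hrev := totalScore_revProfile_of_add_rev_eq (fun j => h k hk2 hkm j a) P
    have h₁ := hwin b hb
    have h₂ := hwin_rev b hb
    rw [hrev, hrev] at h₂
    linarith

section Borda

variable {k : ℕ} {u : Fin k → ℝ} {α β : ℝ}

theorem totalScore_eq_sub_positionSum (hu : ∀ j : Fin k, u j = α * ((k : ℝ) - 1 - j) + β)
    {n : ℕ} (P : Fin n → Equiv.Perm (Fin k)) (x : Fin k) :
    TotalScore u P x = n * (α * (k - 1) + β) - α * positionSum P x := by
  rw [TotalScore, positionSum, Finset.mul_sum, ← nsmul_eq_mul, ← Fin.sum_const,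
    ← Finset.sum_sub_distrib]
  exact Finset.sum_congr rfl fun i _ => by rw [hu]; ring

theorem rTotalL_eq_sub_positionSum (hu : ∀ j : Fin k, u j = α * ((k : ℝ) - 1 - j) + β)
    {n : ℕ} {P : Fin n → Equiv.Perm (Fin (k + 1))} {x : Fin (k + 1)}
    (hx : ∀ i, (P i x : ℕ) < k) :
    RTotalL u P x = n * (α * (k - 1) + β) - α * positionSum P x := by
  rw [RTotalL, positionSum, Finset.mul_sum, ← nsmul_eq_mul, ← Fin.sum_const,
    ← Finset.sum_sub_distrib]
  exact Finset.sum_congr rfl fun i _ => by rw [dif_pos (hx i), hu]; ring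

end Borda

theorem indepUnanimousLosers_of_isBordaEquivalent {m : ℕ} {s : ∀ k, Fin k → ℝ}
    (h : ∀ k, k ≤ m → IsBordaEquivalent (s k)) : IndepUnanimousLosers m s := by
  intro k hk n hn P c hc
  obtain ⟨α, hα, β, hs⟩ := h (k + 1) hk
  obtain ⟨α', hα', β', hs'⟩ := h k (by omega)
  have hlt : ∀ a, a ≠ c → ∀ i, (P i a : ℕ) < k := fun a ha i =>
    lt_of_le_of_ne (Nat.lt_succ_iff.mp (P i a).isLt)
      fun h => ha ((P i).injective (Fin.ext (h.trans (hc i).symm)))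
  refine ⟨fun a ha => ?_, fun a b ha hb => ?_⟩
  · have hpos : positionSum P a < positionSum P c :=
      Finset.sum_lt_sum_of_nonempty (Finset.univ_nonempty_iff.2 ⟨⟨0, hn⟩⟩) fun i _ => by
        rw [hc i]
        exact_mod_cast hlt a ha i
    rw [totalScore_eq_sub_positionSum hs, totalScore_eq_sub_positionSum hs]
    exact sub_lt_sub_left (mul_lt_mul_of_pos_left hpos hα) _
  · rw [totalScore_eq_sub_positionSum hs, totalScore_eq_sub_positionSum hs,
      rTotalL_eq_sub_positionSum hs' (hlt a ha), rTotalL_eq_sub_positionSum hs' (hlt b hb),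
      sub_le_sub_iff_left, sub_le_sub_iff_left, mul_le_mul_iff_right₀ hα,
      mul_le_mul_iff_right₀ hα']

theorem isBordaEquivalent_of_indepUnanimousLosers_of_reversalSymmetry {m : ℕ}
    {s : ∀ k, Fin k → ℝ} (hI : IndepUnanimousLosers m s) (hR : ReversalSymmetry m s) :
    ∀ k, k ≤ m → IsBordaEquivalent (s k) := by
  intro k
  induction k with
  | zero => exact fun _ => ⟨1, one_pos, 0, fun j => j.elim0⟩
  | succ k ih =>
    intro hk
    rcases k with _ | k
    · exact ⟨1, one_pos, s 1 0, fun j => by simp [Fin.fin_one_eq_zero j]⟩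
    · have hrev := reversalSymmetry_iff.1 hR (k + 2) (by omega) hk
      have hlast :=
        score_last_lt_of_indepUnanimousLosers hI hk (Fin.castSucc_ne_last (Fin.last k))
      exact (((ih (by omega)).isArithProg.castSucc_of_indepUnanimousLosers hI hk).of_castSucc
        hrev).isBordaEquivalent hlast

/-- Borda is the unique scoring rule (up to linear equivalence) satisfying independence of
unanimous losers and reversal symmetry. -/
theorem stmt12 (m : ℕ) (s : ∀ k, Fin k → ℝ) :
    (IndepUnanimousLosers m s ∧ ReversalSymmetry m s) ↔
      ∀ k, k ≤ m → ∃ α : ℝ, 0 < α ∧ ∃ β : ℝ,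
        ∀ j : Fin k, s k j = α * ((k : ℝ) - 1 - (j : ℕ)) + β :=
  ⟨fun ⟨hI, hR⟩ => isBordaEquivalent_of_indepUnanimousLosers_of_reversalSymmetry hI hR,
    fun h => ⟨indepUnanimousLosers_of_isBordaEquivalent h,
      reversalSymmetry_iff.2 fun k _ hk => IsBordaEquivalent.add_rev_eq (h k hk)⟩⟩
end

section
/- No single-round positional scoring rule with strictly decreasing scores s_1 > s_2 > ... > s_k (k ≥ 3) satisfies the majority criterion: for any such scores with s_2 > s_k, choosing an integer n > (s_1 − s_2)/(s_2 − s_k) yields a profile of 2n+1 races in which candidate a is first in n+1 races (a majority) and in position k in the other n races, while candidate b is first in n races and second in n+1 races, and b's total score strictly exceeds a's. -/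
lemma card_filter_val_lt (m c : ℕ) (h : c ≤ m) :
    (Finset.univ.filter fun i : Fin m => (i : ℕ) < c).card = c := by
  rw [← Fintype.card_subtype]
  have e : {i : Fin m // (i : ℕ) < c} ≃ Fin c :=
    ⟨fun x => ⟨x.1, x.2⟩, fun y => ⟨⟨y.1, lt_of_lt_of_le y.2 h⟩, y.2⟩,
      fun _ => rfl, fun _ => rfl⟩
  rw [Fintype.card_congr e, Fintype.card_fin]

lemma card_filter_val_not_lt (m c : ℕ) (h : c ≤ m) :
    (Finset.univ.filter fun i : Fin m => ¬ (i : ℕ) < c).card = m - c := by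
  have h1 := Finset.card_filter_add_card_filter_not
    (s := (Finset.univ : Finset (Fin m))) (p := fun i => (i : ℕ) < c)
  rw [card_filter_val_lt m c h, Finset.card_univ, Fintype.card_fin] at h1
  omega

/-- No single-round scoring rule with strictly decreasing scores (`k ≥ 3`) satisfies the
majority criterion: for `n > (s₁ - s₂)/(s₂ - s_k)` there is a profile of `2n+1` races where
`a` is first in `n+1` races (a majority) and last in the other `n`, while `b` is first in
`n` races and second in `n+1`, yet `b`'s total strictly exceeds `a`'s. -/
theorem stmt14 (k : ℕ) (hk : 3 ≤ k) (s : Fin k → ℝ)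
    (hdec : ∀ i j : Fin k, i < j → s j < s i)
    (h2k : s ⟨1, by omega⟩ > s ⟨k - 1, by omega⟩)
    (n : ℕ)
    (hn : (n : ℝ) > (s ⟨0, by omega⟩ - s ⟨1, by omega⟩) / (s ⟨1, by omega⟩ - s ⟨k - 1, by omega⟩)) :
    ∃ P : Fin (2 * n + 1) → Equiv.Perm (Fin k), ∃ a b : Fin k, a ≠ b ∧
      (Finset.univ.filter fun i => (P i a : ℕ) = 0).card = n + 1 ∧
      (Finset.univ.filter fun i => (P i a : ℕ) = k - 1).card = n ∧
      (Finset.univ.filter fun i => (P i b : ℕ) = 0).card = n ∧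
      (Finset.univ.filter fun i => (P i b : ℕ) = 1).card = n + 1 ∧
      2 * (Finset.univ.filter fun i => (P i a : ℕ) = 0).card > 2 * n + 1 ∧
      TotalScore s P a < TotalScore s P b := by
  have h0 : 0 < k := by omega
  have h1 : 1 < k := by omega
  have hL : k - 1 < k := by omega
  set a0 : Fin k := ⟨0, h0⟩ with ha0
  set a1 : Fin k := ⟨1, h1⟩ with ha1
  set L : Fin k := ⟨k - 1, hL⟩ with hLd
  have h01 : a0 ≠ a1 := by simp [ha0, ha1, Fin.ext_iff]
  have h0L : a0 ≠ L := by simp [ha0, hLd, Fin.ext_iff]; omega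
  have h1L : a1 ≠ L := by simp [ha1, hLd, Fin.ext_iff]; omega
  set f : Equiv.Perm (Fin k) := (Equiv.swap a0 a1).trans (Equiv.swap a1 L) with hf
  have hfa0 : f a0 = L := by
    simp [hf, Equiv.trans_apply, Equiv.swap_apply_left]
  have hfa1 : f a1 = a0 := by
    simp [hf, Equiv.trans_apply, Equiv.swap_apply_right,
      Equiv.swap_apply_of_ne_of_ne h01 h0L]
  set P : Fin (2 * n + 1) → Equiv.Perm (Fin k) :=
    fun i => if (i : ℕ) < n + 1 then Equiv.refl _ else f with hP
  have hPa : ∀ i, (P i a0 : ℕ) = if (i : ℕ) < n + 1 then 0 else k - 1 := by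
    intro i
    by_cases h : (i : ℕ) < n + 1 <;> simp only [hP, h, if_true, if_false, hfa0] <;> simp [hfa0, ha0, hLd]
  have hPb : ∀ i, (P i a1 : ℕ) = if (i : ℕ) < n + 1 then 1 else 0 := by
    intro i
    by_cases h : (i : ℕ) < n + 1 <;> simp only [hP, h, if_true, if_false, hfa1] <;> simp [hfa1, ha0, ha1]
  have hle : n + 1 ≤ 2 * n + 1 := by omega
  have hc1 : (Finset.univ.filter fun i => (P i a0 : ℕ) = 0).card = n + 1 := by
    have : (Finset.univ.filter fun i => (P i a0 : ℕ) = 0)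
        = Finset.univ.filter fun i : Fin (2 * n + 1) => (i : ℕ) < n + 1 := by
      apply Finset.filter_congr
      intro i _
      rw [hPa i]
      by_cases h : (i : ℕ) < n + 1 <;> simp [h] <;> omega
    rw [this, card_filter_val_lt _ _ hle]
  have hc2 : (Finset.univ.filter fun i => (P i a0 : ℕ) = k - 1).card = n := by
    have : (Finset.univ.filter fun i => (P i a0 : ℕ) = k - 1)
        = Finset.univ.filter fun i : Fin (2 * n + 1) => ¬ (i : ℕ) < n + 1 := by
      apply Finset.filter_congr
      intro i _
      rw [hPa i]
      by_cases h : (i : ℕ) < n + 1 <;> simp [h] <;> omega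
    rw [this, card_filter_val_not_lt _ _ hle]
    omega
  have hc3 : (Finset.univ.filter fun i => (P i a1 : ℕ) = 0).card = n := by
    have : (Finset.univ.filter fun i => (P i a1 : ℕ) = 0)
        = Finset.univ.filter fun i : Fin (2 * n + 1) => ¬ (i : ℕ) < n + 1 := by
      apply Finset.filter_congr
      intro i _
      rw [hPb i]
      by_cases h : (i : ℕ) < n + 1 <;> simp [h]
    rw [this, card_filter_val_not_lt _ _ hle]
    omega
  have hc4 : (Finset.univ.filter fun i => (P i a1 : ℕ) = 1).card = n + 1 := by
    have : (Finset.univ.filter fun i => (P i a1 : ℕ) = 1)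
        = Finset.univ.filter fun i : Fin (2 * n + 1) => (i : ℕ) < n + 1 := by
      apply Finset.filter_congr
      intro i _
      rw [hPb i]
      by_cases h : (i : ℕ) < n + 1 <;> simp [h]
    rw [this, card_filter_val_lt _ _ hle]
  have hTa : TotalScore s P a0 = (n + 1 : ℝ) * s a0 + (n : ℝ) * s L := by
    have hfun : ∀ i : Fin (2 * n + 1),
        s (P i a0) = if (i : ℕ) < n + 1 then s a0 else s L := by
      intro i
      by_cases h : (i : ℕ) < n + 1 <;> simp only [hP, h, if_true, if_false] <;> simp [hfa0]
    rw [TotalScore]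
    simp_rw [hfun]
    rw [Finset.sum_ite, Finset.sum_const, Finset.sum_const,
      card_filter_val_lt _ _ hle, card_filter_val_not_lt _ _ hle]
    have : 2 * n + 1 - (n + 1) = n := by omega
    rw [this]
    push_cast
    ring
  have hTb : TotalScore s P a1 = (n + 1 : ℝ) * s a1 + (n : ℝ) * s a0 := by
    have hfun : ∀ i : Fin (2 * n + 1),
        s (P i a1) = if (i : ℕ) < n + 1 then s a1 else s a0 := by
      intro i
      by_cases h : (i : ℕ) < n + 1 <;> simp only [hP, h, if_true, if_false] <;> simp [hfa1]
    rw [TotalScore]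
    simp_rw [hfun]
    rw [Finset.sum_ite, Finset.sum_const, Finset.sum_const,
      card_filter_val_lt _ _ hle, card_filter_val_not_lt _ _ hle]
    have : 2 * n + 1 - (n + 1) = n := by omega
    rw [this]
    push_cast
    ring
  refine ⟨P, a0, a1, h01, hc1, hc2, hc3, hc4, by omega, ?_⟩
  rw [hTa, hTb]
  have hpos : s a1 - s L > 0 := by
    have : s a1 > s L := h2k
    linarith
  have hkey : s a0 - s a1 < (n : ℝ) * (s a1 - s L) := by
    have := (div_lt_iff₀ hpos).mp hn
    linarith
  nlinarith
end

section
/- The scoring rule that awards scores (k, k−1, ..., 3, 2, 0) for k candidates (Borda with an extra point for all but the last position) never ranks a majority loser first: a majority loser's total over n races is strictly less than n·k/2, which is at most the average total score n(k+2)(k−1)/(2k), for all k ≥ 2. -/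
/-!
A majority loser scores `0` in more than half of the `n` races and at most `k` in the others,
so its total is below `n k / 2`. Every race hands out `(k + 2)(k - 1)/2` points in total, so the
average total is `n (k + 2)(k - 1)/(2k)`, which is at least `n k / 2` because `k² ≤ k² + k - 2`.
A candidate strictly below the average is beaten by someone.
-/

open Finset

theorem sum_totalScore {n k : ℕ} (s : Fin k → ℝ) (P : Fin n → Equiv.Perm (Fin k)) :
    ∑ a, TotalScore s P a = n * ∑ j, s j := by
  simp only [TotalScore]
  rw [sum_comm]
  simp [Equiv.sum_comp]

theorem totalScore_lt_of_majority_zero {n k : ℕ} {s : Fin k → ℝ} {M : ℝ}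
    (hM : 0 < M) (hs : ∀ j, s j ≤ M) (P : Fin n → Equiv.Perm (Fin k)) (c : Fin k)
    (hmaj : n < 2 * #{i | s (P i c) = 0}) :
    TotalScore s P c < n * M / 2 := by
  have hcard := card_filter_add_card_filter_not (s := univ) (fun i => s (P i c) = 0)
  rw [card_univ, Fintype.card_fin] at hcard
  have hrest : ∑ i with s (P i c) ≠ 0, s (P i c) ≤ #{i | s (P i c) ≠ 0} * M := by
    simpa using sum_le_sum fun i (_ : i ∈ ({i | s (P i c) ≠ 0} : Finset _)) => hs (P i c)
  have hzero : ∑ i with s (P i c) = 0, s (P i c) = 0 := sum_eq_zero fun i hi => (mem_filter.1 hi).2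
  have hmajR : (n : ℝ) < 2 * #{i | s (P i c) = 0} := by exact_mod_cast hmaj
  have hcardR : (#{i | s (P i c) = 0} : ℝ) + #{i | s (P i c) ≠ 0} = n := by exact_mod_cast hcard
  rw [TotalScore, ← sum_filter_add_sum_filter_not univ (fun i => s (P i c) = 0), hzero, zero_add]
  nlinarith

/-- The scores `(k, k-1, ..., 3, 2, 0)` of the positions `0, ..., k-1`. -/
def bordaPlus (k : ℕ) (j : Fin k) : ℝ :=
  if (j : ℕ) = k - 1 then 0 else (k : ℝ) - (j : ℕ)

theorem bordaPlus_le (k : ℕ) (j : Fin k) : bordaPlus k j ≤ k := by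
  unfold bordaPlus
  split_ifs
  · positivity
  · linarith [(j : ℕ).cast_nonneg (α := ℝ)]

theorem sum_range_cast_mul_two (m : ℕ) : (∑ i ∈ range m, (i : ℝ)) * 2 = m * (m - 1) := by
  induction m with
  | zero => simp
  | succ m ih => rw [sum_range_succ]; push_cast; linarith

theorem sum_bordaPlus {k : ℕ} (hk : 0 < k) :
    ∑ j, bordaPlus k j = (k + 2) * (k - 1) / 2 := by
  obtain ⟨m, rfl⟩ := Nat.exists_eq_succ_of_ne_zero hk.ne'
  rw [Fin.sum_univ_castSucc]
  simp only [bordaPlus, Fin.val_castSucc, Fin.val_last, Nat.succ_sub_one, if_pos]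
  rw [sum_congr rfl fun (i : Fin m) _ => if_neg i.isLt.ne, Fin.sum_univ_eq_sum_range
    (fun i => ((m.succ : ℕ) : ℝ) - i), sum_sub_distrib, sum_const, card_range, nsmul_eq_mul]
  push_cast
  linarith [sum_range_cast_mul_two m]

/-- The scoring rule with scores `(k, k-1, ..., 3, 2, 0)` (Borda plus one point for every
position except the last) never ranks a majority loser first: the majority loser's total
over `n` races is strictly below `n·k/2`, which is at most the average total
`n(k+2)(k-1)/(2k)`, for all `k ≥ 2`. -/
theorem stmt17 (k n : ℕ) (hk : 2 ≤ k) (P : Fin n → Equiv.Perm (Fin k)) (c : Fin k)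
    (hml : 2 * (Finset.univ.filter fun i => (P i c : ℕ) = k - 1).card > n) :
    TotalScore (fun j : Fin k => if (j : ℕ) = k - 1 then 0 else (k : ℝ) - (j : ℕ)) P c <
      (n : ℝ) * (k : ℝ) / 2 ∧
    (n : ℝ) * (k : ℝ) / 2 ≤ (n : ℝ) * ((k : ℝ) + 2) * ((k : ℝ) - 1) / (2 * (k : ℝ)) ∧
    (∑ a, TotalScore (fun j : Fin k => if (j : ℕ) = k - 1 then 0 else (k : ℝ) - (j : ℕ)) P a)
        / (k : ℝ) = (n : ℝ) * ((k : ℝ) + 2) * ((k : ℝ) - 1) / (2 * (k : ℝ)) ∧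
    ∃ b : Fin k,
      TotalScore (fun j : Fin k => if (j : ℕ) = k - 1 then 0 else (k : ℝ) - (j : ℕ)) P c <
        TotalScore (fun j : Fin k => if (j : ℕ) = k - 1 then 0 else (k : ℝ) - (j : ℕ)) P b := by
  change TotalScore (bordaPlus k) P c < _ ∧ _ ∧ (∑ a, TotalScore (bordaPlus k) P a) / _ = _ ∧
    ∃ b, TotalScore (bordaPlus k) P c < TotalScore (bordaPlus k) P b
  have hkR : (2 : ℝ) ≤ k := by exact_mod_cast hk
  have hlast : #{i | (P i c : ℕ) = k - 1} ≤ #{i | bordaPlus k (P i c) = 0} :=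
    card_le_card <| monotone_filter_right _ fun i _ hi => by simp [bordaPlus, hi]
  have hloser : TotalScore (bordaPlus k) P c < n * k / 2 :=
    totalScore_lt_of_majority_zero (by positivity) (bordaPlus_le k) P c (by omega)
  have hhalf : (n : ℝ) * k / 2 ≤ n * (k + 2) * (k - 1) / (2 * k) := by
    rw [div_le_div_iff₀ two_pos (by positivity)]
    nlinarith [mul_nonneg n.cast_nonneg (sub_nonneg.2 hkR)]
  have havg : (∑ a, TotalScore (bordaPlus k) P a) / k = n * (k + 2) * (k - 1) / (2 * k) := by
    rw [sum_totalScore, sum_bordaPlus (by omega)]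
    ring
  refine ⟨hloser, hhalf, havg, ?_⟩
  obtain ⟨b, -, hb⟩ := exists_lt_of_sum_lt (s := univ) (f := fun _ => TotalScore (bordaPlus k) P c)
    (g := TotalScore (bordaPlus k) P) <| by
    rw [sum_const, card_univ, Fintype.card_fin, nsmul_eq_mul]
    rw [div_eq_iff (by positivity)] at havg
    nlinarith
  exact ⟨b, hb⟩
end
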